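/- arXiv:1310.7716 — 2 statements merged into one kernel-verified Lean document; each statement's English description precedes it below -/
import Mathlib

section
/- Let r ≥ 1, let A = (a_{νμ}) ∈ M_r(ℝ) have all entries strictly positive, let x = (x_ν), y = (y_ν) ∈ (0,1)^r, and let s = (s_ν) ∈ ℂ^r satisfy Re(s_1 + ⋯ + s_r) > r. Then the multiple series Σ_{m ∈ ℤ_{≥0}^r} e(m·y) / ∏_{ν=1}^r (Σ_{μ=1}^r a_{νμ}(x_μ + m_μ))^{s_ν} converges absolutely. -/
open MeasureTheory

noncomputable section

/-- `e z = exp (2 π i z)` -/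
def eC (z : ℂ) : ℂ := Complex.exp (2 * Real.pi * Complex.I * z)

/-- `φ(t,x,y) = e(itx)/(1 - e(y + it))` -/
def phiF (t x y : ℝ) : ℂ := eC (Complex.I * t * x) / (1 - eC (y + Complex.I * t))

/-- `F(t,x,y) = ∏_ν φ(t_ν, x_ν, y_ν)` -/
def FF {r : ℕ} (t x y : Fin r → ℝ) : ℂ := ∏ ν, phiF (t ν) (x ν) (y ν)

/-- `Γ_ℝ(s) = π^(-s/2) Γ(s/2)` -/
def GammaR (s : ℂ) : ℂ := (Real.pi : ℂ) ^ (-s / 2) * Complex.Gamma (s / 2)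

/-- `Γ_ℂ(s) = 2 (2π)^(-s) Γ(s)` -/
def GammaC (s : ℂ) : ℂ := 2 * (2 * (Real.pi : ℂ)) ^ (-s) * Complex.Gamma s

/-- the quasi-character `|t|_χ^s = ∏_ν sgn(t_ν)^{χ(ν)} |t_ν|^{s_ν}` -/
def qchar {r : ℕ} (χ : Fin r → ℕ) (s : Fin r → ℂ) (t : Fin r → ℝ) : ℂ :=
  ∏ ν, ((Real.sign (t ν) : ℂ)) ^ (χ ν) * ((|t ν| : ℝ) : ℂ) ^ (s ν)

/-- the Shintani L-function, defined by the integral representation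
`L(s,A,x,y) = 2^r (∏ Γ_ℂ(s_ν))⁻¹ ∫_{(0,∞)^r} F(tA,x,y) t^s ∏ dt_ν/t_ν` -/
def ShintaniL {r : ℕ} (s : Fin r → ℂ) (A : Matrix (Fin r) (Fin r) ℝ)
    (x y : Fin r → ℝ) : ℂ :=
  2 ^ r * (∏ ν, GammaC (s ν))⁻¹ *
    ∫ t in Set.univ.pi fun _ : Fin r => Set.Ioi (0 : ℝ),
      FF (Matrix.vecMul t A) x y * ∏ ν, (((t ν : ℝ) : ℂ) ^ (s ν) * ((t ν : ℝ) : ℂ)⁻¹)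

/-- the normalized Shintani L-function of parity type χ,
`L_χ(s,A,x,y) = (∏ Γ_ℂ(s_ν))⁻¹ ∫_{(ℝ^×)^r} F(tA,x,y) |t|_χ^s ∏ dt_ν/t_ν` -/
def ShintaniLchi {r : ℕ} (χ : Fin r → ℕ) (s : Fin r → ℂ)
    (A : Matrix (Fin r) (Fin r) ℝ) (x y : Fin r → ℝ) : ℂ :=
  (∏ ν, GammaC (s ν))⁻¹ *
    ∫ t : Fin r → ℝ,
      FF (Matrix.vecMul t A) x y * qchar χ s t * ∏ ν, ((t ν : ℝ) : ℂ)⁻¹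

/-- `Γ_χ(s) = ∏_ν Γ_ℝ(s_ν + χ(ν))` -/
def GammaChi {r : ℕ} (χ : Fin r → ℕ) (s : Fin r → ℂ) : ℂ :=
  ∏ ν, GammaR (s ν + (χ ν : ℂ))

/-- the completed normalized Shintani L-function
`L̂_χ(s,A,x,y) = |det A|^{1/2} Γ_χ(s) L_χ(s,A,x,y)` -/
def ShintaniLhat {r : ℕ} (χ : Fin r → ℕ) (s : Fin r → ℂ)
    (A : Matrix (Fin r) (Fin r) ℝ) (x y : Fin r → ℝ) : ℂ :=
  ((Real.sqrt |A.det| : ℝ) : ℂ) * GammaChi χ s * ShintaniLchi χ s A x y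



/-!
Since `|e(t)| = 1` for real `t`, the `m`-th term has absolute value
`∏_ν L_ν(m)^{-Re s_ν}` with `L_ν(m) = ∑_μ a_{νμ}(x_μ + m_μ)`. Each `L_ν(m)` is an affine form with
positive coefficients in `m ≥ 0`, hence comparable to `1 + |m|` (where `|m| = ∑_μ m_μ`), so the
term is `O((1 + |m|)^{-σ})` with `σ = Re(s_1 + ⋯ + s_r) > r`. Finally
`(1 + |m|)^{-σ} ≤ ∏_μ (1 + m_μ)^{-σ/r}`, a product of convergent one-variable `p`-series.
-/

theorem summable_fin_prod_apply_of_nonneg {β : Type*} :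
    ∀ {n : ℕ} {g : Fin n → β → ℝ}, (∀ i b, 0 ≤ g i b) → (∀ i, Summable (g i)) →
      Summable fun m : Fin n → β => ∏ i, g i (m i)
  | 0, _, _, _ => Summable.of_finite
  | n + 1, g, hg, hsum => by
    have htail : Summable fun m : Fin n → β => ∏ i, g i.succ (m i) :=
      summable_fin_prod_apply_of_nonneg (fun i => hg i.succ) (fun i => hsum i.succ)
    rw [← (Fin.consEquiv fun _ => β).summable_iff]
    refine ((hsum 0).mul_of_nonneg htail (hg 0)
      fun m => Finset.prod_nonneg fun i _ => hg i.succ (m i)).congr fun p => ?_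
    simp [Fin.consEquiv, Fin.prod_univ_succ]

theorem summable_one_add_natCast_rpow_neg {p : ℝ} (hp : 1 < p) :
    Summable fun n : ℕ => (1 + (n : ℝ)) ^ (-p) := by
  refine ((Real.summable_one_div_nat_add_rpow 1 p).2 hp).congr fun n => ?_
  rw [add_comm, abs_of_nonneg (by positivity), one_div, Real.rpow_neg (by positivity)]

theorem one_add_sum_rpow_neg_le_prod {ι : Type*} [Fintype ι] {v : ι → ℝ} (hv : ∀ i, 0 ≤ v i)
    {q : ℝ} (hq : 0 ≤ q) :
    (1 + ∑ i, v i) ^ (-(Fintype.card ι * q)) ≤ ∏ i, (1 + v i) ^ (-q) := by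
  have hT : 0 ≤ 1 + ∑ i, v i := by linarith [Finset.sum_nonneg fun i (_ : i ∈ Finset.univ) => hv i]
  rw [mul_comm, ← neg_mul, Real.rpow_mul_natCast hT, ← Finset.card_univ, ← Finset.prod_const]
  refine Finset.prod_le_prod (fun _ _ => Real.rpow_nonneg hT _) fun i _ => ?_
  refine Real.rpow_le_rpow_of_nonpos (by linarith [hv i]) ?_ (by linarith)
  linarith [Finset.single_le_sum (fun j _ => hv j) (Finset.mem_univ i)]

theorem summable_one_add_sum_rpow_neg {n : ℕ} {σ : ℝ} (hσ : n < σ) :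
    Summable fun m : Fin n → ℕ => (1 + ∑ i, (m i : ℝ)) ^ (-σ) := by
  rcases n.eq_zero_or_pos with rfl | hn
  · exact Summable.of_finite
  have hn' : (0 : ℝ) < n := Nat.cast_pos.2 hn
  set p := σ / n
  have hσp : σ = Fintype.card (Fin n) * p := by
    rw [Fintype.card_fin, mul_div_cancel₀ _ hn'.ne']
  have hp : 1 < p := (one_lt_div hn').2 hσ
  refine Summable.of_nonneg_of_le (fun m => Real.rpow_nonneg (by positivity) _)
    (fun m => hσp ▸ one_add_sum_rpow_neg_le_prod (fun i => (m i).cast_nonneg) (by positivity))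
    (summable_fin_prod_apply_of_nonneg (fun _ _ => Real.rpow_nonneg (by positivity) _)
      fun _ => summable_one_add_natCast_rpow_neg hp)

theorem rpow_le_max_rpow_mul_rpow {α M f g : ℝ} (hα : 0 < α) (hg : 0 < g)
    (hlow : α * g ≤ f) (hupp : f ≤ M * g) (t : ℝ) :
    f ^ t ≤ max (α ^ t) (M ^ t) * g ^ t := by
  have hu : α ≤ f / g := (le_div_iff₀ hg).2 hlow
  have hu' : f / g ≤ M := (div_le_iff₀ hg).2 hupp
  have hu0 : 0 < f / g := hα.trans_le hu
  rw [← div_mul_cancel₀ f hg.ne', Real.mul_rpow hu0.le hg.le]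
  refine mul_le_mul_of_nonneg_right ?_ (Real.rpow_nonneg hg.le _)
  rcases le_total 0 t with ht | ht
  · exact (Real.rpow_le_rpow hu0.le hu' ht).trans (le_max_right _ _)
  · exact (Real.rpow_le_rpow_of_nonpos hα hu ht).trans (le_max_left _ _)

theorem exists_mul_one_add_sum_le_affine {ι : Type*} [Fintype ι] {a : ι → ℝ} {b : ℝ}
    (ha : ∀ i, 0 < a i) (hb : 0 < b) :
    ∃ α M : ℝ, 0 < α ∧ ∀ v : ι → ℝ, (∀ i, 0 ≤ v i) →
      α * (1 + ∑ i, v i) ≤ b + ∑ i, a i * v i ∧ b + ∑ i, a i * v i ≤ M * (1 + ∑ i, v i) := by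
  classical
  set C := insert b (Finset.univ.image a)
  have hC : C.Nonempty := Finset.insert_nonempty _ _
  refine ⟨C.min' hC, C.max' hC, ?_, fun v hv => ⟨?_, ?_⟩⟩
  · simpa [C, Finset.lt_min'_iff] using ⟨hb, ha⟩
  · rw [mul_add, mul_one, Finset.mul_sum]
    gcongr with i
    · exact C.min'_le b (Finset.mem_insert_self _ _)
    · exact hv i
    · exact C.min'_le _ (Finset.mem_insert_of_mem (Finset.mem_image_of_mem _ (Finset.mem_univ i)))
  · rw [mul_add, mul_one, Finset.mul_sum]
    gcongr with i
    · exact C.le_max' b (Finset.mem_insert_self _ _)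
    · exact hv i
    · exact C.le_max' _ (Finset.mem_insert_of_mem (Finset.mem_image_of_mem _ (Finset.mem_univ i)))

theorem exists_affine_rpow_le_mul_one_add_sum_rpow {ι : Type*} [Fintype ι] {a : ι → ℝ}
    {b : ℝ} (ha : ∀ i, 0 < a i) (hb : 0 < b) (t : ℝ) :
    ∃ K : ℝ, ∀ v : ι → ℝ, (∀ i, 0 ≤ v i) →
      (b + ∑ i, a i * v i) ^ t ≤ K * (1 + ∑ i, v i) ^ t := by
  obtain ⟨α, M, hα, hbounds⟩ := exists_mul_one_add_sum_le_affine ha hb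
  refine ⟨max (α ^ t) (M ^ t), fun v hv => ?_⟩
  have hT : 0 < 1 + ∑ i, v i := by
    linarith [Finset.sum_nonneg fun i (_ : i ∈ Finset.univ) => hv i]
  exact rpow_le_max_rpow_mul_rpow hα hT (hbounds v hv).1 (hbounds v hv).2 t

theorem norm_eC_ofReal (t : ℝ) : ‖eC t‖ = 1 := by
  rw [eC, Complex.norm_exp]
  simp

theorem norm_eC_ofReal_div_prod_cpow {ι : Type*} [Fintype ι] (t : ℝ) {c : ι → ℝ}
    (hc : ∀ i, 0 < c i) (s : ι → ℂ) :
    ‖eC t / ∏ i, (c i : ℂ) ^ s i‖ = ∏ i, c i ^ (-(s i).re) := by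
  rw [norm_div, norm_eC_ofReal, norm_prod, one_div, ← Finset.prod_inv_distrib]
  refine Finset.prod_congr rfl fun i _ => ?_
  rw [Complex.norm_cpow_eq_rpow_re_of_pos (hc i), Real.rpow_neg (hc i).le]

theorem stmt_0_general (r : ℕ) (A : Matrix (Fin r) (Fin r) ℝ)
    (hA : ∀ ν μ, 0 < A ν μ) (x y : Fin r → ℝ)
    (hx : ∀ ν, x ν ∈ Set.Ioo (0 : ℝ) 1)
    (s : Fin r → ℂ) (hs : (r : ℝ) < (∑ ν, s ν).re) :
    Summable (fun m : Fin r → ℕ =>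
      ‖eC ((∑ ν, (m ν : ℝ) * y ν : ℝ) : ℂ) /
        ∏ ν, (((∑ μ, A ν μ * (x μ + (m μ : ℝ)) : ℝ) : ℂ)) ^ (s ν)‖) := by
  have hb : ∀ ν, 0 < ∑ μ, A ν μ * x μ := fun ν =>
    Finset.sum_pos (fun μ _ => mul_pos (hA ν μ) (hx μ).1) ⟨ν, Finset.mem_univ ν⟩
  choose K hK using fun ν =>
    exists_affine_rpow_le_mul_one_add_sum_rpow (hA ν) (hb ν) (-(s ν).re)
  have hterm : ∀ m : Fin r → ℕ,
      ‖eC ((∑ ν, (m ν : ℝ) * y ν : ℝ) : ℂ) /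
        ∏ ν, (((∑ μ, A ν μ * (x μ + (m μ : ℝ)) : ℝ) : ℂ)) ^ (s ν)‖ ≤
      (∏ ν, K ν) * (1 + ∑ μ, (m μ : ℝ)) ^ (-(∑ ν, s ν).re) := by
    intro m
    have hm : ∀ μ, 0 ≤ (m μ : ℝ) := fun μ => (m μ).cast_nonneg
    have hsplit : ∀ ν, ∑ μ, A ν μ * (x μ + m μ) = ∑ μ, A ν μ * x μ + ∑ μ, A ν μ * m μ :=
      fun ν => by simp only [mul_add, Finset.sum_add_distrib]
    have hpos : ∀ ν, 0 < ∑ μ, A ν μ * (x μ + m μ) := fun ν => hsplit ν ▸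
      add_pos_of_pos_of_nonneg (hb ν) (Finset.sum_nonneg fun μ _ => mul_nonneg (hA ν μ).le (hm μ))
    have hT : 0 < 1 + ∑ μ, (m μ : ℝ) := by
      linarith [Finset.sum_nonneg fun μ (_ : μ ∈ Finset.univ) => hm μ]
    rw [norm_eC_ofReal_div_prod_cpow _ hpos, Complex.re_sum, ← Finset.sum_neg_distrib,
      Real.rpow_sum_of_pos hT, ← Finset.prod_mul_distrib]
    exact Finset.prod_le_prod (fun ν _ => Real.rpow_nonneg (hpos ν).le _)
      fun ν _ => hsplit ν ▸ hK ν _ hm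
  exact Summable.of_nonneg_of_le (fun _ => norm_nonneg _) hterm
    ((summable_one_add_sum_rpow_neg hs).mul_left _)

theorem stmt_0 (r : ℕ) (hr : 1 ≤ r) (A : Matrix (Fin r) (Fin r) ℝ)
    (hA : ∀ ν μ, 0 < A ν μ) (x y : Fin r → ℝ)
    (hx : ∀ ν, x ν ∈ Set.Ioo (0 : ℝ) 1) (hy : ∀ ν, y ν ∈ Set.Ioo (0 : ℝ) 1)
    (s : Fin r → ℂ) (hs : (r : ℝ) < (∑ ν, s ν).re) :
    Summable (fun m : Fin r → ℕ =>
      ‖eC ((∑ ν, (m ν : ℝ) * y ν : ℝ) : ℂ) /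
        ∏ ν, (((∑ μ, A ν μ * (x μ + (m μ : ℝ)) : ℝ) : ℂ)) ^ (s ν)‖) :=
  stmt_0_general r A hA x y hx s hs
end
end

section
/- Let r ≥ 1, A ∈ GL_r(ℝ), x, y ∈ (0,1)^r, and k ∈ ℝ^r. Then ∫_{ℝ^r} F(tA, x, y) e(t·k) dt = (i^r / |det A|) · e(−y·x) · F(kA*, y, 1−x), where A* = (Aᵀ)^{−1} and 1−x = (1−x_1,…,1−x_r). -/
open MeasureTheory

noncomputable section

/-!
After the linear substitution `s = tA` the integrand is a product of one-variable functions, so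
by Fubini it suffices to treat `r = 1`. There the substitution `u = e^{-2πt}` turns
`∫ φ(t,x,y) e(tk) dt` into `(2π)⁻¹` times the Mellin transform at `s = x - ik` of
`u ↦ (1 + e^{iθ} u)⁻¹`, where `θ = π(2y - 1) ∈ (-π, π)`. This Mellin transform `H(θ)` equals
`π / sin(πs) · e^{-isθ}`: at `θ = 0` it is the beta integral `B(s, 1 - s)`, and differentiating
under the integral sign and integrating by parts in `u` gives `H' = -is H` on `(-π, π)`.
-/

open Set Filter Topology Complex Asymptotics
open scoped Real

theorem Matrix.vecMul_dotProduct_vecMul_transpose_inv {ι R : Type*} [Fintype ι] [DecidableEq ι]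
    [CommRing R] {A : Matrix ι ι R} (hA : IsUnit A.det) (t k : ι → R) :
    Matrix.vecMul t A ⬝ᵥ Matrix.vecMul k A.transpose⁻¹ = t ⬝ᵥ k := by
  rw [← Matrix.transpose_nonsing_inv, Matrix.vecMul_transpose, Matrix.dotProduct_mulVec,
    Matrix.vecMul_vecMul, Matrix.mul_nonsing_inv _ hA, Matrix.vecMul_one]

theorem integral_comp_vecMul {ι E : Type*} [Fintype ι] [DecidableEq ι] [NormedAddCommGroup E]
    [NormedSpace ℝ E] {A : Matrix ι ι ℝ} (hA : A.det ≠ 0) (g : (ι → ℝ) → E) :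
    ∫ t, g (Matrix.vecMul t A) = |A.det|⁻¹ • ∫ t, g t := by
  have hdet : LinearMap.det (Matrix.toLin' A.transpose) ≠ 0 := by
    rwa [LinearMap.det_toLin', Matrix.det_transpose]
  let L := (LinearMap.equivOfDetNeZero _ hdet).toContinuousLinearEquiv
  calc ∫ t, g (Matrix.vecMul t A) = ∫ t, g t ∂(Measure.map L volume) := by
        erw [L.toHomeomorph.measurableEmbedding.integral_map g]
        simp [L, LinearMap.equivOfDetNeZero, Matrix.mulVec_transpose]
    _ = |A.det|⁻¹ • ∫ t, g t := by
        rw [show (L : (ι → ℝ) → ι → ℝ) = Matrix.toLin' A.transpose from rfl,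
          Measure.map_linearMap_addHaar_eq_smul_addHaar _ hdet, integral_smul_measure,
          LinearMap.det_toLin', Matrix.det_transpose, ENNReal.toReal_ofReal (abs_nonneg _),
          abs_inv]

theorem integrableOn_rpow_mul_inv_one_add_pow {a : ℝ} {n : ℕ} (ha : 0 < a) (han : a < n) :
    IntegrableOn (fun u : ℝ => u ^ (a - 1) * ((1 + u) ^ n)⁻¹) (Ioi 0) := by
  refine mellin_convergent_of_isBigO_scalar (b := 0) ?_ ?_ han ?_ ha
  · exact (ContinuousOn.inv₀ (by fun_prop) fun u hu => by
      have : (0 : ℝ) < 1 + u := by linarith [mem_Ioi.mp hu]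
      positivity).locallyIntegrableOn measurableSet_Ioi
  · refine IsBigO.of_bound 1 ?_
    filter_upwards [eventually_gt_atTop 0] with u hu
    rw [Real.rpow_neg hu.le, Real.rpow_natCast, norm_inv, norm_inv, one_mul, norm_pow, norm_pow,
      Real.norm_of_nonneg hu.le, Real.norm_of_nonneg (by linarith)]
    gcongr
    linarith
  · refine IsBigO.of_bound 1 ?_
    filter_upwards [self_mem_nhdsWithin] with u (hu : 0 < u)
    rw [neg_zero, Real.rpow_zero, norm_one, one_mul, norm_inv, norm_pow,
      Real.norm_of_nonneg (by linarith)]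
    exact inv_le_one_of_one_le₀ (one_le_pow₀ (by linarith))

theorem mellin_add_one_of_hasDerivAt {f f' : ℝ → ℂ} {s : ℂ} (hs : s ≠ 0)
    (hf : ∀ u ∈ Ioi (0 : ℝ), HasDerivAt f (f' u) u)
    (hf_conv : MellinConvergent f s) (hf'_conv : MellinConvergent f' (s + 1))
    (h_zero : Tendsto (fun u : ℝ => (u : ℂ) ^ s * f u) (𝓝[>] 0) (𝓝 0))
    (h_top : Tendsto (fun u : ℝ => (u : ℂ) ^ s * f u) atTop (𝓝 0)) :
    mellin f' (s + 1) = -(s * mellin f s) := by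
  have hpow : ∀ u ∈ Ioi (0 : ℝ),
      HasDerivAt (fun u : ℝ => (u : ℂ) ^ s) (s * (u : ℂ) ^ (s - 1)) u :=
    fun u hu => hasDerivAt_ofReal_cpow_const (ne_of_gt hu) hs
  have hibp := integral_Ioi_mul_deriv_eq_deriv_mul hpow hf
    (by simpa [MellinConvergent, Pi.mul_def] using hf'_conv)
    (by simpa [MellinConvergent, Pi.mul_def, mul_left_comm, mul_assoc] using hf_conv.const_smul s)
    h_zero h_top
  simp only [mellin, add_sub_cancel_right, smul_eq_mul, sub_self, zero_sub] at hibp ⊢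
  simp only [hibp, mul_assoc, integral_const_mul]

theorem mellin_eq_integral_cexp_neg_mul {E : Type*} [NormedAddCommGroup E] [NormedSpace ℂ E]
    (f : ℝ → E) (s : ℂ) : mellin f s = ∫ v : ℝ, cexp (-s * v) • f (Real.exp (-v)) := by
  have hderiv : ∀ v ∈ univ, HasDerivWithinAt (fun v => Real.exp (-v)) (-Real.exp (-v)) univ v :=
    fun v _ => ((Real.hasDerivAt_exp (-v)).comp v (hasDerivAt_neg v)).hasDerivWithinAt.congr_deriv
      (by ring)
  have himage : (fun v => Real.exp (-v)) '' univ = Ioi 0 := by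
    rw [← Real.range_exp, image_univ]
    exact (Equiv.neg ℝ).surjective.range_comp Real.exp
  rw [mellin, ← himage, integral_image_eq_integral_abs_deriv_smul MeasurableSet.univ hderiv
    (Real.exp_injective.comp neg_injective).injOn, setIntegral_univ]
  congr 1 with v
  rw [abs_neg, abs_of_pos (Real.exp_pos _), ← smul_assoc, ofReal_exp, ofReal_neg,
    cpow_def_of_ne_zero (Complex.exp_ne_zero _), Complex.log_exp (by simp [Real.pi_pos])
      (by simpa using Real.pi_nonneg), Complex.real_smul, ofReal_exp, ← Complex.exp_add]
  congr 2
  push_cast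
  ring

theorem eq_mul_cexp_of_hasDerivAt {f : ℝ → ℂ} {c : ℂ} {U : Set ℝ} (hU : IsOpen U)
    (hU' : IsPreconnected U) (hf : ∀ x ∈ U, HasDerivAt f (c * f x) x) {x₀ x : ℝ}
    (hx₀ : x₀ ∈ U) (hx : x ∈ U) : f x = f x₀ * cexp (c * (x - x₀)) := by
  have hK : ∀ y ∈ U, HasDerivAt (fun y : ℝ => f y * cexp (-(c * y))) 0 y := fun y hy => by
    have he : HasDerivAt (fun y : ℝ => cexp (-(c * y))) (cexp (-(c * y)) * -c) y :=
      (((hasDerivAt_id (y : ℂ)).const_mul c).neg.cexp.comp_ofReal).congr_deriv (by simp)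
    exact ((hf y hy).mul he).congr_deriv (by ring)
  have hconst := hU.is_const_of_deriv_eq_zero hU'
    (fun y hy => (hK y hy).differentiableAt.differentiableWithinAt)
    (fun y hy => (hK y hy).deriv) hx hx₀
  calc f x = f x * cexp (-(c * x)) * cexp (c * x) := by
        rw [mul_assoc, ← Complex.exp_add, neg_add_cancel, Complex.exp_zero, mul_one]
    _ = f x₀ * cexp (c * (x - x₀)) := by
        rw [hconst, mul_assoc, ← Complex.exp_add]
        congr 2
        ring

theorem image_div_one_sub_Ioo : (fun v : ℝ => v / (1 - v)) '' Ioo 0 1 = Ioi 0 := by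
  ext u
  constructor
  · rintro ⟨v, hv, rfl⟩
    exact div_pos hv.1 (by linarith [hv.2])
  · intro (hu : 0 < u)
    refine ⟨u / (1 + u), ⟨by positivity, by rw [div_lt_one (by positivity)]; linarith⟩, ?_⟩
    field_simp
    ring

theorem mellin_inv_one_add {s : ℂ} (hs0 : 0 < s.re) (hs1 : s.re < 1) :
    mellin (fun u : ℝ => (1 + (u : ℂ))⁻¹) s = π / Complex.sin (π * s) := by
  have hderiv : ∀ v ∈ Ioo (0 : ℝ) 1,
      HasDerivWithinAt (fun v : ℝ => v / (1 - v)) ((1 - v) ^ 2)⁻¹ (Ioo 0 1) v := fun v hv => by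
    have hv1 : 1 - v ≠ 0 := by linarith [hv.2]
    refine ((hasDerivAt_id v).div ((hasDerivAt_id v).const_sub 1) hv1).hasDerivWithinAt
      |>.congr_deriv ?_
    simp only [id]
    field_simp
    ring
  have hinj : InjOn (fun v : ℝ => v / (1 - v)) (Ioo 0 1) := fun a ha b hb hab => by
    have ha1 : 1 - a ≠ 0 := by linarith [ha.2]
    have hb1 : 1 - b ≠ 0 := by linarith [hb.2]
    field_simp at hab
    linarith
  have hintegrand : ∀ v ∈ Ioo (0 : ℝ) 1,
      |((1 - v) ^ 2)⁻¹| •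
          (((v / (1 - v) : ℝ) : ℂ) ^ (s - 1) • (1 + ((v / (1 - v) : ℝ) : ℂ))⁻¹) =
        (v : ℂ) ^ (s - 1) * (1 - (v : ℂ)) ^ ((1 - s) - 1) := fun v hv => by
    have hw : (0 : ℝ) < 1 - v := by linarith [hv.2]
    have hw' : (1 - (v : ℂ)) ≠ 0 := by exact_mod_cast hw.ne'
    rw [abs_of_pos (by positivity), ofReal_div, div_cpow_ofReal_nonneg hv.1.le hw.le, ofReal_sub,
      ofReal_one, show (1 : ℂ) - s - 1 = -s by ring, cpow_neg, cpow_sub _ _ hw', cpow_one,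
      Complex.real_smul, smul_eq_mul]
    have : (1 - (v : ℂ)) ^ s ≠ 0 := cpow_ne_zero_iff.mpr (Or.inl hw')
    push_cast
    field_simp
    ring
  rw [mellin, ← image_div_one_sub_Ioo,
    integral_image_eq_integral_abs_deriv_smul measurableSet_Ioo hderiv hinj,
    setIntegral_congr_fun measurableSet_Ioo hintegrand, ← integral_Ioc_eq_integral_Ioo,
    ← intervalIntegral.integral_of_le zero_le_one, ← betaIntegral,
    betaIntegral_eq_Gamma_mul_div _ _ hs0 (by simpa using hs1), add_sub_cancel,
    Complex.Gamma_one, div_one, Gamma_mul_Gamma_one_sub]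

theorem cos_half_mul_le_norm_one_add_exp_mul_I_mul (θ u : ℝ) :
    Real.cos (θ / 2) * (1 + u) ≤ ‖1 + cexp (θ * I) * u‖ := by
  have hsq : ‖1 + cexp (θ * I) * u‖ ^ 2 = 1 + 2 * u * Real.cos θ + u ^ 2 := by
    rw [Complex.sq_norm, Complex.normSq_apply]
    simp only [add_re, one_re, add_im, one_im, mul_re, mul_im, exp_ofReal_mul_I_re,
      exp_ofReal_mul_I_im, ofReal_re, ofReal_im]
    nlinarith [Real.sin_sq_add_cos_sq θ]
  have hcos : Real.cos θ = 2 * Real.cos (θ / 2) ^ 2 - 1 := by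
    rw [← Real.cos_two_mul, mul_div_cancel₀ θ two_ne_zero]
  refine le_trans (le_abs_self _) (abs_le_of_sq_le_sq ?_ (norm_nonneg _))
  rw [hsq, hcos]
  nlinarith [mul_nonneg (sub_nonneg.mpr (Real.cos_sq_le_one (θ / 2))) (sq_nonneg (1 - u))]

theorem cos_half_le_cos_half_of_abs_le {θ b : ℝ} (hθb : |θ| ≤ b) (hb : b < π) :
    Real.cos (b / 2) ≤ Real.cos (θ / 2) := by
  rw [← Real.cos_abs (θ / 2), abs_div, abs_two]
  exact Real.cos_le_cos_of_nonneg_of_le_pi (by positivity) (by linarith [Real.pi_pos])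
    (by linarith)

theorem cos_half_pos_of_lt_pi {b : ℝ} (hb : b < π) (hb0 : 0 ≤ b) : 0 < Real.cos (b / 2) :=
  Real.cos_pos_of_mem_Ioo ⟨by linarith [Real.pi_pos], by linarith⟩

theorem norm_inv_one_add_exp_mul_I_mul_pow_le {θ b : ℝ} (hθb : |θ| ≤ b) (hb : b < π)
    {u : ℝ} (hu : 0 ≤ u) (n : ℕ) :
    ‖((1 + cexp (θ * I) * u) ^ n)⁻¹‖ ≤ (Real.cos (b / 2) ^ n)⁻¹ * ((1 + u) ^ n)⁻¹ := by
  have hc := cos_half_pos_of_lt_pi hb ((abs_nonneg θ).trans hθb)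
  rw [norm_inv, norm_pow, ← mul_inv, ← mul_pow]
  refine inv_anti₀ (by positivity) (pow_le_pow_left₀ (by positivity) ?_ n)
  exact (mul_le_mul_of_nonneg_right (cos_half_le_cos_half_of_abs_le hθb hb) (by linarith)).trans
    (cos_half_mul_le_norm_one_add_exp_mul_I_mul θ u)

theorem one_add_exp_mul_I_mul_ne_zero {θ : ℝ} (hθ : |θ| < π) {u : ℝ} (hu : 0 ≤ u) :
    1 + cexp (θ * I) * u ≠ 0 := by
  have hc := cos_half_pos_of_lt_pi hθ (abs_nonneg θ)
  refine norm_pos_iff.mp ((mul_pos hc (by linarith : (0 : ℝ) < 1 + u)).trans_le ?_)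
  exact (mul_le_mul_of_nonneg_right (cos_half_le_cos_half_of_abs_le le_rfl hθ) (by linarith)).trans
    (cos_half_mul_le_norm_one_add_exp_mul_I_mul θ u)

theorem mellinConvergent_inv_one_add_exp_mul_I_mul_pow {θ : ℝ} (hθ : |θ| < π) {n : ℕ}
    {s : ℂ} (hs : 0 < s.re) (hsn : s.re < n) :
    MellinConvergent (fun u : ℝ => ((1 + cexp (θ * I) * u) ^ n)⁻¹) s := by
  refine Integrable.mono' ((integrableOn_rpow_mul_inv_one_add_pow hs hsn).const_mul
    (Real.cos (|θ| / 2) ^ n)⁻¹) ?_ ?_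
  · refine ContinuousOn.aestronglyMeasurable (fun u (hu : 0 < u) => ?_) measurableSet_Ioi
    refine ContinuousAt.continuousWithinAt
      (ContinuousAt.smul (f := fun t : ℝ => (t : ℂ) ^ (s - 1)) ?_ ?_)
    · exact continuousAt_ofReal_cpow_const _ _ (Or.inr hu.ne')
    · exact ((continuous_const.add (continuous_const.mul continuous_ofReal)).pow n).continuousAt
        |>.inv₀ (pow_ne_zero _ (one_add_exp_mul_I_mul_ne_zero hθ hu.le))
  · filter_upwards [ae_restrict_mem measurableSet_Ioi] with u hu
    rw [norm_smul, norm_cpow_eq_rpow_re_of_pos hu, sub_re, one_re, mul_left_comm]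
    exact mul_le_mul_of_nonneg_left (norm_inv_one_add_exp_mul_I_mul_pow_le le_rfl hθ hu.le n)
      (Real.rpow_nonneg hu.le _)

theorem norm_cpow_mul_inv_one_add_exp_mul_I_mul_le {θ : ℝ} (hθ : |θ| < π) (s : ℂ) {u : ℝ}
    (hu : 0 < u) :
    ‖(u : ℂ) ^ s * (1 + cexp (θ * I) * u)⁻¹‖ ≤
      (Real.cos (|θ| / 2))⁻¹ * (u ^ s.re * (1 + u)⁻¹) := by
  have h := norm_inv_one_add_exp_mul_I_mul_pow_le le_rfl hθ hu.le 1
  simp only [pow_one] at h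
  rw [norm_mul, norm_cpow_eq_rpow_re_of_pos hu, mul_left_comm]
  exact mul_le_mul_of_nonneg_left h (Real.rpow_nonneg hu.le _)

theorem exp_mul_I_mul_mellin_inv_one_add_exp_mul_I_mul_sq {θ : ℝ} (hθ : |θ| < π) {s : ℂ}
    (hs0 : 0 < s.re) (hs1 : s.re < 1) :
    cexp (θ * I) * mellin (fun u : ℝ => ((1 + cexp (θ * I) * u) ^ 2)⁻¹) (s + 1) =
      s * mellin (fun u : ℝ => (1 + cexp (θ * I) * u)⁻¹) s := by
  set w := cexp (θ * I)
  have hderiv : ∀ u ∈ Ioi (0 : ℝ), HasDerivAt (fun u : ℝ => (1 + w * u)⁻¹)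
      ((-w) • ((1 + w * u) ^ 2)⁻¹) u := fun u hu => by
    have := ((hasDerivAt_id (u : ℂ)).const_mul w).const_add 1 |>.comp_ofReal.inv
      (one_add_exp_mul_I_mul_ne_zero hθ (le_of_lt hu))
    simpa [Pi.inv_def, div_eq_mul_inv] using this
  have hbound := fun u (hu : (0 : ℝ) < u) => norm_cpow_mul_inv_one_add_exp_mul_I_mul_le hθ s hu
  set C := (Real.cos (|θ| / 2))⁻¹
  have hC : 0 ≤ C := inv_nonneg.mpr (cos_half_pos_of_lt_pi hθ (abs_nonneg θ)).le
  have h_zero : Tendsto (fun u : ℝ => (u : ℂ) ^ s * (1 + w * u)⁻¹) (𝓝[>] 0) (𝓝 0) := by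
    refine squeeze_zero_norm' (a := fun u => C * u ^ s.re) ?_ ?_
    · filter_upwards [self_mem_nhdsWithin] with u (hu : 0 < u)
      refine (hbound u hu).trans (mul_le_mul_of_nonneg_left ?_ hC)
      exact mul_le_of_le_one_right (Real.rpow_nonneg hu.le _)
        (inv_le_one_of_one_le₀ (by linarith))
    · have := (Real.continuousAt_rpow_const 0 s.re (Or.inr hs0.le)).tendsto.mono_left
        (nhdsWithin_le_nhds (s := Ioi 0)) |>.const_mul C
      rwa [Real.zero_rpow hs0.ne', mul_zero] at this
  have h_top : Tendsto (fun u : ℝ => (u : ℂ) ^ s * (1 + w * u)⁻¹) atTop (𝓝 0) := by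
    refine squeeze_zero_norm' (a := fun u => C * u ^ (-(1 - s.re))) ?_ ?_
    · filter_upwards [eventually_gt_atTop 0] with u hu
      refine (hbound u hu).trans (mul_le_mul_of_nonneg_left ?_ hC)
      rw [neg_sub, Real.rpow_sub hu, Real.rpow_one, div_eq_mul_inv]
      exact mul_le_mul_of_nonneg_left (inv_anti₀ hu (by linarith)) (Real.rpow_nonneg hu.le _)
    · have := (tendsto_rpow_neg_atTop (by linarith : 0 < 1 - s.re)).const_mul C
      rwa [mul_zero] at this
  have h := mellin_add_one_of_hasDerivAt (ne_of_apply_ne re (by simpa using hs0.ne')) hderiv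
    (by simpa using mellinConvergent_inv_one_add_exp_mul_I_mul_pow hθ (n := 1) hs0 (by simpa))
    ((mellinConvergent_inv_one_add_exp_mul_I_mul_pow hθ (n := 2) (by simp; linarith)
      (by simp; linarith)).const_smul _) h_zero h_top
  rw [mellin_const_smul, smul_eq_mul, neg_mul] at h
  exact neg_inj.mp h

theorem hasDerivAt_inv_one_add_exp_mul_I_mul {θ : ℝ} (hθ : |θ| < π) {u : ℝ} (hu : 0 ≤ u) :
    HasDerivAt (fun θ : ℝ => (1 + cexp (θ * I) * u)⁻¹)
      (-(I * cexp (θ * I)) * u * ((1 + cexp (θ * I) * u) ^ 2)⁻¹) θ := by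
  have hexp : HasDerivAt (fun θ : ℝ => cexp (θ * I)) (cexp (θ * I) * I) θ :=
    ((hasDerivAt_id (θ : ℂ)).mul_const I |>.cexp).comp_ofReal.congr_deriv (by simp)
  have := ((hexp.mul_const (u : ℂ)).const_add 1).inv (one_add_exp_mul_I_mul_ne_zero hθ hu)
  simpa [Pi.inv_def, div_eq_mul_inv, mul_comm, mul_left_comm] using this

theorem hasDerivAt_mellin_inv_one_add_exp_mul_I_mul {θ₀ : ℝ} (hθ₀ : |θ₀| < π) {s : ℂ}
    (hs0 : 0 < s.re) (hs1 : s.re < 1) :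
    HasDerivAt (fun θ : ℝ => mellin (fun u : ℝ => (1 + cexp (θ * I) * u)⁻¹) s)
      (-(I * cexp (θ₀ * I)) *
        mellin (fun u : ℝ => ((1 + cexp (θ₀ * I) * u) ^ 2)⁻¹) (s + 1)) θ₀ := by
  set b := (π + |θ₀|) / 2 with hb_def
  have hb : b < π := by linarith
  have hball : ∀ θ ∈ Metric.ball θ₀ ((π - |θ₀|) / 2), |θ| ≤ b := fun θ hθ => by
    have := abs_sub_abs_le_abs_sub θ θ₀
    rw [Metric.mem_ball, Real.dist_eq] at hθ
    linarith [hb_def]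
  have hnear : ∀ᶠ θ in 𝓝 θ₀, |θ| < π :=
    continuous_abs.continuousAt.eventually_lt continuousAt_const hθ₀
  have hconv := fun {θ : ℝ} (hθ : |θ| < π) =>
    mellinConvergent_inv_one_add_exp_mul_I_mul_pow hθ (n := 1) hs0 (by simpa)
  have hconv₂ := (mellinConvergent_inv_one_add_exp_mul_I_mul_pow hθ₀ (n := 2) (s := s + 1)
    (by simp; linarith) (by simp; linarith)).const_smul (-(I * cexp (θ₀ * I)))
  simp only [pow_one] at hconv
  rw [← smul_eq_mul, ← mellin_const_smul]
  refine (hasDerivAt_integral_of_dominated_loc_of_deriv_le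
    (F' := fun θ u => (u : ℂ) ^ (s + 1 - 1) •
      (-(I * cexp (θ * I))) • ((1 + cexp (θ * I) * u) ^ 2)⁻¹)
    (bound := fun u => (Real.cos (b / 2) ^ 2)⁻¹ * (u ^ (s.re + 1 - 1) * ((1 + u) ^ 2)⁻¹))
    (Metric.ball_mem_nhds θ₀ (by linarith : 0 < (π - |θ₀|) / 2))
    (hnear.mono fun θ hθ => (hconv hθ).aestronglyMeasurable) (hconv hθ₀)
    hconv₂.aestronglyMeasurable ?_
    ((integrableOn_rpow_mul_inv_one_add_pow (by linarith) (by norm_num; linarith)).const_mul _)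
    ?_).2
  · filter_upwards [ae_restrict_mem measurableSet_Ioi] with u (hu : 0 < u) θ hθ
    rw [add_sub_cancel_right, add_sub_cancel_right, norm_smul, norm_smul,
      norm_cpow_eq_rpow_re_of_pos hu, norm_neg, norm_mul, norm_I, norm_exp_ofReal_mul_I, one_mul,
      one_mul, mul_left_comm]
    exact mul_le_mul_of_nonneg_left
      (norm_inv_one_add_exp_mul_I_mul_pow_le (hball θ hθ) hb hu.le 2) (Real.rpow_nonneg hu.le _)
  · filter_upwards [ae_restrict_mem measurableSet_Ioi] with u (hu : 0 < u) θ hθ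
    refine ((hasDerivAt_inv_one_add_exp_mul_I_mul ((hball θ hθ).trans_lt hb) hu.le).const_smul
      ((u : ℂ) ^ (s - 1))).congr_deriv ?_
    rw [add_sub_cancel_right, smul_eq_mul, smul_eq_mul, smul_eq_mul,
      cpow_sub _ _ (ofReal_ne_zero.mpr hu.ne'), cpow_one]
    field_simp [ofReal_ne_zero.mpr hu.ne']

theorem mellin_inv_one_add_exp_mul_I_mul {θ : ℝ} (hθ : |θ| < π) {s : ℂ} (hs0 : 0 < s.re)
    (hs1 : s.re < 1) :
    mellin (fun u : ℝ => (1 + cexp (θ * I) * u)⁻¹) s =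
      π / Complex.sin (π * s) * cexp (-(I * s * θ)) := by
  have hderiv : ∀ θ ∈ Ioo (-π) π,
      HasDerivAt (fun θ : ℝ => mellin (fun u : ℝ => (1 + cexp (θ * I) * u)⁻¹) s)
        (-(I * s) * mellin (fun u : ℝ => (1 + cexp (θ * I) * u)⁻¹) s) θ := fun θ hθ => by
    have habs : |θ| < π := abs_lt.mpr hθ
    have := hasDerivAt_mellin_inv_one_add_exp_mul_I_mul habs hs0 hs1
    rwa [neg_mul, mul_assoc, exp_mul_I_mul_mellin_inv_one_add_exp_mul_I_mul_sq habs hs0 hs1,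
      ← mul_assoc, ← neg_mul] at this
  rw [eq_mul_cexp_of_hasDerivAt isOpen_Ioo isPreconnected_Ioo hderiv
    ⟨neg_neg_of_pos Real.pi_pos, Real.pi_pos⟩ (abs_lt.mp hθ)]
  simp only [ofReal_zero, zero_mul, Complex.exp_zero, one_mul, sub_zero]
  rw [mellin_inv_one_add hs0 hs1, neg_mul]

theorem mem_integerComplement_of_re_mem_Ioo {s : ℂ} (hs : s.re ∈ Ioo (0 : ℝ) 1) :
    s ∈ integerComplement := by
  rintro ⟨n, rfl⟩
  have h0 : (0 : ℤ) < n := by exact_mod_cast hs.1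
  have h1 : n < 1 := by exact_mod_cast hs.2
  omega

theorem one_sub_cexp_neg_two_pi_I_mul (s : ℂ) :
    1 - cexp (-(2 * π * I * s)) = 2 * I * Complex.sin (π * s) * cexp (-(π * I * s)) := by
  set E := cexp (-(π * I * s))
  have hE : cexp (-(π * s) * I) = E := by congr 1; ring
  have hinv : cexp (π * s * I) * E = 1 := by
    rw [← Complex.exp_add, ← Complex.exp_zero]; congr 1; ring
  rw [Complex.sin, hE, show -(2 * π * I * s) = -(π * I * s) + -(π * I * s) by ring,
    Complex.exp_add]
  linear_combination (-(E - cexp (π * s * I)) * E) * I_sq - hinv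

theorem phiF_mul_eC (t x y k : ℝ) :
    phiF t x y * eC ((t * k : ℝ) : ℂ) =
      cexp (-(x - I * k) * ((2 * π * t : ℝ) : ℂ)) •
        (1 + cexp ((π * (2 * y - 1) : ℝ) * I) * (Real.exp (-(2 * π * t)) : ℂ))⁻¹ := by
  have hnum : eC (I * t * x) * eC ((t * k : ℝ) : ℂ) =
      cexp (-(x - I * k) * ((2 * π * t : ℝ) : ℂ)) := by
    rw [eC, eC, ← Complex.exp_add]
    congr 1
    push_cast
    linear_combination (2 * π * t * x : ℂ) * I_sq
  have hden : 1 - eC (y + I * t) =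
      1 + cexp ((π * (2 * y - 1) : ℝ) * I) * (Real.exp (-(2 * π * t)) : ℂ) := by
    have : cexp ((π * (2 * y - 1) : ℝ) * I) * (Real.exp (-(2 * π * t)) : ℂ) =
        eC (y + I * t) * cexp (-(π * I)) := by
      rw [eC, ofReal_exp, ← Complex.exp_add, ← Complex.exp_add]
      congr 1
      push_cast
      linear_combination (-(2 * π * t) : ℂ) * I_sq
    rw [this, Complex.exp_neg, exp_pi_mul_I]
    ring
  rw [phiF, smul_eq_mul, ← hnum, hden, div_mul_eq_mul_div, div_eq_mul_inv]

theorem inv_two_pi_smul_eq_I_mul_eC_mul_phiF {x : ℝ} (hx : x ∈ Ioo (0 : ℝ) 1) (y k : ℝ) :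
    (2 * π : ℝ)⁻¹ • (π / Complex.sin (π * (x - I * k)) *
        cexp (-(I * (x - I * k) * (π * (2 * y - 1) : ℝ)))) =
      I * eC (-((y * x : ℝ) : ℂ)) * phiF k y (1 - x) := by
  set s : ℂ := x - I * k
  have hsin : Complex.sin (π * s) ≠ 0 :=
    sin_pi_mul_ne_zero (mem_integerComplement_of_re_mem_Ioo (by simpa [s] using hx))
  have hden : 1 - eC (((1 - x : ℝ) : ℂ) + I * k) =
      2 * I * Complex.sin (π * s) * cexp (-(π * I * s)) := by
    rw [← one_sub_cexp_neg_two_pi_I_mul, eC,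
      show 2 * π * I * (((1 - x : ℝ) : ℂ) + I * k) = -(2 * π * I * s) + 2 * π * I by
        push_cast; ring,
      Complex.exp_add, exp_two_pi_mul_I, mul_one]
  have hexp : cexp (-(I * s * (π * (2 * y - 1) : ℝ))) * cexp (-(π * I * s)) =
      eC (-((y * x : ℝ) : ℂ)) * eC (I * k * y) := by
    rw [eC, eC, ← Complex.exp_add, ← Complex.exp_add]
    congr 1
    push_cast
    ring
  have hπ : (π : ℂ) ≠ 0 := ofReal_ne_zero.mpr Real.pi_ne_zero
  rw [phiF, hden, Complex.real_smul]
  push_cast at hexp ⊢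
  field_simp
  ring_nf at hexp ⊢
  linear_combination hexp

theorem integral_phiF_mul_eC {x y : ℝ} (hx : x ∈ Ioo (0 : ℝ) 1) (hy : y ∈ Ioo (0 : ℝ) 1)
    (k : ℝ) :
    ∫ t : ℝ, phiF t x y * eC ((t * k : ℝ) : ℂ) =
      I * eC (-((y * x : ℝ) : ℂ)) * phiF k y (1 - x) := by
  have hθ : |π * (2 * y - 1)| < π := by
    rw [abs_mul, abs_of_pos Real.pi_pos]
    exact mul_lt_of_lt_one_right Real.pi_pos
      (abs_lt.mpr ⟨by linarith [hy.1], by linarith [hy.2]⟩)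
  simp_rw [phiF_mul_eC]
  rw [Measure.integral_comp_mul_left (fun v : ℝ => cexp (-(x - I * k) * v) •
      (1 + cexp ((π * (2 * y - 1) : ℝ) * I) * (Real.exp (-v) : ℂ))⁻¹),
    ← mellin_eq_integral_cexp_neg_mul
      (fun u : ℝ => (1 + cexp ((π * (2 * y - 1) : ℝ) * I) * u)⁻¹),
    mellin_inv_one_add_exp_mul_I_mul hθ (by simpa using hx.1) (by simpa using hx.2),
    abs_of_pos (inv_pos.mpr Real.two_pi_pos)]
  exact inv_two_pi_smul_eq_I_mul_eC_mul_phiF hx y k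

theorem eC_sum {ι : Type*} (s : Finset ι) (z : ι → ℂ) :
    eC (∑ i ∈ s, z i) = ∏ i ∈ s, eC (z i) := by
  simp only [eC, Finset.mul_sum, Complex.exp_sum]

theorem stmt_6_general (r : ℕ) (A : Matrix (Fin r) (Fin r) ℝ) (hA : A.det ≠ 0)
    (x y : Fin r → ℝ)
    (hx : ∀ ν, x ν ∈ Set.Ioo (0 : ℝ) 1) (hy : ∀ ν, y ν ∈ Set.Ioo (0 : ℝ) 1)
    (k : Fin r → ℝ) :
    ∫ t : Fin r → ℝ, FF (Matrix.vecMul t A) x y * eC ((∑ ν, t ν * k ν : ℝ) : ℂ) =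
      Complex.I ^ r / ((|A.det| : ℝ) : ℂ) * eC (-((∑ ν, y ν * x ν : ℝ) : ℂ)) *
        FF (Matrix.vecMul k A.transpose⁻¹) y (fun ν => 1 - x ν) := by
  set κ := Matrix.vecMul k A.transpose⁻¹
  set G : (Fin r → ℝ) → ℂ := fun s => ∏ ν, phiF (s ν) (x ν) (y ν) * eC ((s ν * κ ν : ℝ) : ℂ)
  have hG : ∀ t, FF (Matrix.vecMul t A) x y * eC ((∑ ν, t ν * k ν : ℝ) : ℂ) =
      G (Matrix.vecMul t A) := fun t => by
    rw [← dotProduct, ← Matrix.vecMul_dotProduct_vecMul_transpose_inv (isUnit_iff_ne_zero.mpr hA),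
      dotProduct, ofReal_sum, eC_sum, FF, ← Finset.prod_mul_distrib]
  calc ∫ t, FF (Matrix.vecMul t A) x y * eC ((∑ ν, t ν * k ν : ℝ) : ℂ)
      = |A.det|⁻¹ • ∏ ν, ∫ t : ℝ, phiF t (x ν) (y ν) * eC ((t * κ ν : ℝ) : ℂ) := by
        simp_rw [hG]
        rw [integral_comp_vecMul hA G, integral_fintype_prod_volume_eq_prod
          (fun ν (t : ℝ) => phiF t (x ν) (y ν) * eC ((t * κ ν : ℝ) : ℂ))]
    _ = |A.det|⁻¹ • ∏ ν, I * eC (-((y ν * x ν : ℝ) : ℂ)) * phiF (κ ν) (y ν) (1 - x ν) := by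
        simp_rw [integral_phiF_mul_eC (hx _) (hy _)]
    _ = _ := by
        rw [Finset.prod_mul_distrib, Finset.prod_mul_distrib, Finset.prod_const, Finset.card_fin,
          ← eC_sum, ofReal_sum, ← Finset.sum_neg_distrib, FF, Complex.real_smul, ofReal_inv,
          div_eq_inv_mul]
        ring

theorem stmt_6 (r : ℕ) (hr : 1 ≤ r) (A : Matrix (Fin r) (Fin r) ℝ) (hA : A.det ≠ 0)
    (x y : Fin r → ℝ)
    (hx : ∀ ν, x ν ∈ Set.Ioo (0 : ℝ) 1) (hy : ∀ ν, y ν ∈ Set.Ioo (0 : ℝ) 1)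
    (k : Fin r → ℝ) :
    ∫ t : Fin r → ℝ, FF (Matrix.vecMul t A) x y * eC ((∑ ν, t ν * k ν : ℝ) : ℂ) =
      Complex.I ^ r / ((|A.det| : ℝ) : ℂ) * eC (-((∑ ν, y ν * x ν : ℝ) : ℂ)) *
        FF (Matrix.vecMul k A.transpose⁻¹) y (fun ν => 1 - x ν) :=
  stmt_6_general r A hA x y hx hy k

end
end
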